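/- For all n ≥ 0, the difference s(n+1) - s(n) is never a positive even integer; i.e., if s(n+1) - s(n) > 0 then s(n+1) - s(n) is odd. -/
import Mathlib

def s : ℕ → ℤ
  | 0 => 0
  | n + 1 =>
    if (n + 1) % 2 = 0 then -s ((n + 1) / 2)
    else s (n / 2) + 1
decreasing_by all_goals omega

lemma s_odd (k : ℕ) : s (2 * k + 1) = s k + 1 := by
  rw [show 2 * k + 1 = (2 * k) + 1 from rfl, s]
  simp [Nat.mul_add_mod]

lemma s_even (k : ℕ) : s (2 * k) = -s k := by
  cases k with
  | zero => simp [s]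
  | succ m =>
    rw [show 2 * (m + 1) = (2 * m + 1) + 1 by ring, s]
    have h1 : (2 * m + 1 + 1) % 2 = 0 := by omega
    have h2 : (2 * m + 1 + 1) / 2 = m + 1 := by omega
    rw [h1, h2]
    simp

lemma key (n : ℕ) :
    (Odd (s n + s (n + 1)) → 0 < s n + s (n + 1)) ∧
    (Even (s (n + 1) - s n) → s (n + 1) - s n ≤ 0) := by
  induction n using Nat.strong_induction_on with
  | _ n ih =>
    rcases Nat.even_or_odd n with ⟨k, hk⟩ | ⟨k, hk⟩
    · subst hk
      rw [show k + k = 2 * k by ring, s_even, show 2 * k + 1 = 2 * k + 1 from rfl, s_odd]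
      constructor
      · intro _; omega
      · intro h
        exfalso
        have : ¬ Even (s k + 1 - (-s k)) := by
          intro ⟨a, ha⟩
          have : Odd (s k + 1 - (-s k)) := ⟨s k, by ring⟩
          obtain ⟨b, hb⟩ := this
          omega
        exact this h
    · subst hk
      have e1 : s (2 * k + 1) = s k + 1 := s_odd k
      have e2 : s (2 * k + 1 + 1) = -s (k + 1) := by
        rw [show 2 * k + 1 + 1 = 2 * (k + 1) by ring, s_even]
      rw [e1, e2]
      have hlt : k < 2 * k + 1 := by omega
      obtain ⟨ihA, ihB⟩ := ih k hlt
      constructor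
      · intro hodd
        -- s k + 1 + (-s (k+1)) = 1 - (s (k+1) - s k); odd ⇔ s(k+1)-s k even
        have heven : Even (s (k + 1) - s k) := by
          obtain ⟨a, ha⟩ := hodd
          exact ⟨-a, by omega⟩
        have := ihB heven
        omega
      · intro heven
        -- -s(k+1) - (s k + 1) = -(s k + s(k+1)) - 1; even ⇔ s k + s(k+1) odd
        have hodd : Odd (s k + s (k + 1)) := by
          obtain ⟨a, ha⟩ := heven
          exact ⟨-a - 1, by omega⟩
        have := ihA hodd
        omega

theorem stmt9 (n : ℕ) (h : 0 < s (n + 1) - s n) : Odd (s (n + 1) - s n) := by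
  rcases Int.even_or_odd (s (n + 1) - s n) with he | ho
  · have := (key n).2 he; omega
  · exact ho
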